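/- arXiv:2212.06020 — 2 statements merged into one kernel-verified Lean document; each statement's English description precedes it below -/
import Mathlib

section
/- Let G be a group acting sharply 2-transitively on a set X. Then G contains an involution, and any two involutions of G are conjugate in G. -/
/-- An involution of a group is an element of order 2. -/
def IsInvolution {G : Type*} [Monoid G] (g : G) : Prop := orderOf g = 2

/-- A group `G` acts sharply 2-transitively on `X` if `X` has at least two elements and
any pair of distinct points of `X` is sent to any other such pair by a unique element of `G`. -/
def SharplyTwoTransitive (G X : Type*) [Group G] [MulAction G X] : Prop :=
  Nontrivial X ∧ ∀ x₁ x₂ y₁ y₂ : X, x₁ ≠ x₂ → y₁ ≠ y₂ →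
    ∃! g : G, g • x₁ = y₁ ∧ g • x₂ = y₂

/-!
An element of a sharply 2-transitive group is determined by its values on any pair of distinct
points. Hence the element swapping two distinct points squares to the identity, so it is an
involution; conversely every involution `u` swaps some pair `x, u • x`. Given involutions `u`
and `v` swapping `x, y` and `x', y'`, pick `g` sending `(x, y)` to `(x', y')`: then `g u g⁻¹`
and `v` both swap `x', y'`, so they coincide.
-/

theorem isInvolution_iff {M : Type*} [Monoid M] {g : M} : IsInvolution g ↔ g * g = 1 ∧ g ≠ 1 := by
  have := Fact.mk Nat.prime_two
  rw [IsInvolution, orderOf_eq_prime_iff, sq]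

theorem IsInvolution.smul_smul {M X : Type*} [Monoid M] [MulAction M X] {u : M}
    (hu : IsInvolution u) (x : X) : u • u • x = x := by
  rw [← mul_smul, (isInvolution_iff.mp hu).1, one_smul]

namespace SharplyTwoTransitive

variable {G X : Type*} [Group G] [MulAction G X]

theorem eq_of_smul_eq_smul (h2t : SharplyTwoTransitive G X) {g h : G} {x₁ x₂ : X}
    (hx : x₁ ≠ x₂) (h₁ : g • x₁ = h • x₁) (h₂ : g • x₂ = h • x₂) : g = h :=
  (h2t.2 x₁ x₂ (h • x₁) (h • x₂) hx ((MulAction.injective h).ne hx)).unique ⟨h₁, h₂⟩ ⟨rfl, rfl⟩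

theorem exists_smul_ne (h2t : SharplyTwoTransitive G X) {g : G} (hg : g ≠ 1) :
    ∃ x : X, g • x ≠ x := by
  by_contra! hfix
  obtain ⟨a, b, hab⟩ := h2t.1
  exact hg (h2t.eq_of_smul_eq_smul hab (by rw [hfix, one_smul]) (by rw [hfix, one_smul]))

theorem eq_of_swap (h2t : SharplyTwoTransitive G X) {u v : G} {x y : X} (hxy : x ≠ y)
    (hux : u • x = y) (huy : u • y = x) (hvx : v • x = y) (hvy : v • y = x) : u = v :=
  h2t.eq_of_smul_eq_smul hxy (hux.trans hvx.symm) (huy.trans hvy.symm)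

theorem exists_isInvolution (h2t : SharplyTwoTransitive G X) : ∃ u : G, IsInvolution u := by
  obtain ⟨a, b, hab⟩ := h2t.1
  obtain ⟨u, ⟨hua, hub⟩, -⟩ := h2t.2 a b b a hab hab.symm
  have hsq : u * u = 1 :=
    h2t.eq_of_smul_eq_smul hab (by rw [mul_smul, hua, hub, one_smul])
      (by rw [mul_smul, hub, hua, one_smul])
  have hne : u ≠ 1 := by
    rintro rfl
    exact hab ((one_smul G a).symm.trans hua)
  exact ⟨u, isInvolution_iff.mpr ⟨hsq, hne⟩⟩

theorem isConj_of_isInvolution (h2t : SharplyTwoTransitive G X) {u v : G}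
    (hu : IsInvolution u) (hv : IsInvolution v) : IsConj u v := by
  obtain ⟨x, hx⟩ := h2t.exists_smul_ne (isInvolution_iff.mp hu).2
  obtain ⟨x', hx'⟩ := h2t.exists_smul_ne (isInvolution_iff.mp hv).2
  obtain ⟨g, ⟨hgx, hgy⟩, -⟩ := h2t.2 x (u • x) x' (v • x') hx.symm hx'.symm
  have hg₁ : g⁻¹ • x' = x := inv_smul_eq_iff.mpr hgx.symm
  have hg₂ : g⁻¹ • v • x' = u • x := inv_smul_eq_iff.mpr hgy.symm
  refine isConj_iff.mpr ⟨g, h2t.eq_of_swap hx'.symm ?_ ?_ rfl (hv.smul_smul x')⟩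
  · rw [mul_smul, mul_smul, hg₁, hgy]
  · rw [mul_smul, mul_smul, hg₂, hu.smul_smul, hgx]

end SharplyTwoTransitive

/-- A sharply 2-transitive group contains an involution, and all its involutions
are conjugate. -/
theorem stmt_8 {G X : Type*} [Group G] [MulAction G X]
    (h2t : SharplyTwoTransitive G X) :
    (∃ u : G, IsInvolution u) ∧
    ∀ u v : G, IsInvolution u → IsInvolution v → IsConj u v :=
  ⟨h2t.exists_isInvolution, fun _ _ hu hv => h2t.isConj_of_isInvolution hu hv⟩
end

section
/- Let G be a group belonging to the class C, and let h ∈ G be an element of infinite order that centralizes some involution of G (a homothety). Then h is not a product of two distinct involutions of G (a translation). Hence, in a group of the class C, the three types of infinite-order elements (translation, homothety, isolated) are mutually exclusive. -/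
/-- A subgroup `D ≤ G` is malnormal if `D ∩ gDg⁻¹` is trivial for every `g ∉ D`. -/
def IsMalnormal {G : Type*} [Group G] (D : Subgroup G) : Prop :=
  ∀ g : G, g ∉ D → ∀ x : G, x ∈ D → g * x * g⁻¹ ∈ D → x = 1

/-- A subgroup `D ≤ G` is quasi-malnormal if `D ∩ gDg⁻¹` has at most 2 elements
for every `g ∉ D`. -/
def IsQuasiMalnormal {G : Type*} [Group G] (D : Subgroup G) : Prop :=
  ∀ g : G, g ∉ D → {x : G | x ∈ D ∧ g * x * g⁻¹ ∈ D}.encard ≤ 2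
/-- `AddAut A` as multiplicative automorphisms of `Multiplicative A`. -/
def addAutToMulAut (A : Type*) [AddGroup A] : Multiplicative (AddAut A) →* MulAut (Multiplicative A) where
  toFun f := AddEquiv.toMultiplicative (Multiplicative.toAdd f)
  map_one' := rfl
  map_mul' _ _ := rfl

/-- The action of `ℤˣ = {±1} ≃ ℤ/2ℤ` on `ℚ` by multiplication (i.e. the nontrivial element
acts by negation), as automorphisms of the additive group `ℚ` written multiplicatively. -/
def dqAut : ℤˣ →* MulAut (Multiplicative ℚ) :=
  (addAutToMulAut ℚ).comp (DistribMulAction.toAddAut ℤˣ ℚ)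

/-- The group `D_ℚ = ℚ ⋊ ℤ/2ℤ`, where `ℤ/2ℤ` acts by negation. -/
abbrev DQ : Type := SemidirectProduct (Multiplicative ℚ) ℤˣ dqAut
/-- A pair of distinct involutions `(u, v)` has type `D_ℤ` if `⟨u, v⟩` is contained in a
quasi-malnormal subgroup of `G` isomorphic to the infinite dihedral group
`D_ℤ = ℤ ⋊ ℤ/2ℤ` (which is `DihedralGroup 0` in Mathlib). -/
def PairTypeDZ {G : Type*} [Group G] (u v : G) : Prop :=
  ∃ D : Subgroup G, Subgroup.closure {u, v} ≤ D ∧ IsQuasiMalnormal D ∧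
    Nonempty (D ≃* DihedralGroup 0)

/-- A pair of distinct involutions `(u, v)` has type `D_ℚ` if `⟨u, v⟩` is contained in a
subgroup of `G` isomorphic to `D_ℚ = ℚ ⋊ ℤ/2ℤ`. -/
def PairTypeDQ {G : Type*} [Group G] (u v : G) : Prop :=
  ∃ D : Subgroup G, Subgroup.closure {u, v} ≤ D ∧ Nonempty (D ≃* DQ)

/-- The class `𝒞`: (1) `G` acts by conjugation transitively on its involutions and freely on
ordered pairs of distinct involutions; (2) every pair of distinct involutions has type `D_ℤ`
or type `D_ℚ`; (3) there is a pair of type `D_ℚ`, and `G` acts transitively (by conjugation)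
on the set of pairs of type `D_ℚ`. -/
def ClassC (G : Type*) [Group G] : Prop :=
  (∀ u v : G, IsInvolution u → IsInvolution v → ∃ g : G, g * u * g⁻¹ = v) ∧
  (∀ u v g : G, IsInvolution u → IsInvolution v → u ≠ v →
      g * u * g⁻¹ = u → g * v * g⁻¹ = v → g = 1) ∧
  (∀ u v : G, IsInvolution u → IsInvolution v → u ≠ v → PairTypeDZ u v ∨ PairTypeDQ u v) ∧
  (∃ u v : G, IsInvolution u ∧ IsInvolution v ∧ u ≠ v ∧ PairTypeDQ u v) ∧
  (∀ u v u' v' : G, IsInvolution u → IsInvolution v → u ≠ v → PairTypeDQ u v →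
      IsInvolution u' → IsInvolution v' → u' ≠ v' → PairTypeDQ u' v' →
      ∃ g : G, g * u * g⁻¹ = u' ∧ g * v * g⁻¹ = v')

/-- A translation is an element of infinite order which is a product of two
distinct involutions. -/
def IsTranslation {G : Type*} [Group G] (h : G) : Prop :=
  orderOf h = 0 ∧ ∃ u v : G, IsInvolution u ∧ IsInvolution v ∧ u ≠ v ∧ h = u * v

/-- A homothety is an element of infinite order centralizing some involution. -/
def IsHomothety {G : Type*} [Group G] (h : G) : Prop :=
  orderOf h = 0 ∧ ∃ u : G, IsInvolution u ∧ h * u = u * h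

/-- An element is isolated if it has infinite order and lies in a malnormal infinite
cyclic subgroup. -/
def IsIsolated {G : Type*} [Group G] (h : G) : Prop :=
  orderOf h = 0 ∧ ∃ Z : Subgroup G, h ∈ Z ∧ IsMalnormal Z ∧ IsCyclic Z ∧ Infinite Z

/-- The 3-type condition: every element has order 1, 2 or infinite, and every element of
infinite order is a translation, a homothety, or isolated. -/
def ThreeTypeCondition (G : Type*) [Group G] : Prop :=
  (∀ g : G, orderOf g = 1 ∨ orderOf g = 2 ∨ orderOf g = 0) ∧
  (∀ g : G, orderOf g = 0 → IsTranslation g ∨ IsHomothety g ∨ IsIsolated g)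

/-- The class `𝒞'`: groups in `𝒞` satisfying the 3-type condition. -/
def ClassC' (G : Type*) [Group G] : Prop := ClassC G ∧ ThreeTypeCondition G

/-!
If `h = u * v` with `u ≠ v` involutions, both `u` and `v` invert `h`. An involution `w`
centralizing `h` must commute with every involution `t` inverting `h`: otherwise `h` would fix
the two distinct involutions `w` and `t * w * t⁻¹`, against the freeness of the action on
pairs. So `w` fixes `u` and `v`, hence `w = 1`, which is absurd.

An isolated `h` lies in a malnormal infinite cyclic subgroup `Z`; an involution centralizing or
inverting `h` conjugates `h` into `Z`, so by malnormality it lies in the torsion-free group `Z`.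
-/

namespace IsInvolution

variable {G : Type*} [Group G] {u v : G}

lemma mul_self (hu : IsInvolution u) : u * u = 1 := by
  rw [← sq, ← hu, pow_orderOf_eq_one]

lemma inv_eq_self (hu : IsInvolution u) : u⁻¹ = u :=
  inv_eq_of_mul_eq_one_right hu.mul_self

lemma ne_one (hu : IsInvolution u) : u ≠ 1 := by
  rintro rfl
  simp [IsInvolution] at hu

lemma conj (hu : IsInvolution u) (g : G) : IsInvolution (g * u * g⁻¹) := by
  rw [IsInvolution, ← MulAut.conj_apply, MulEquiv.orderOf_eq, hu]

lemma conj_mul_left (hu : IsInvolution u) (hv : IsInvolution v) :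
    u * (u * v) * u⁻¹ = (u * v)⁻¹ := by
  rw [mul_inv_rev, hu.inv_eq_self, hv.inv_eq_self, ← mul_assoc, hu.mul_self, one_mul]

lemma conj_mul_right (hu : IsInvolution u) (hv : IsInvolution v) :
    v * (u * v) * v⁻¹ = (u * v)⁻¹ := by
  rw [mul_inv_rev, hu.inv_eq_self, hv.inv_eq_self, mul_assoc, mul_assoc, hv.mul_self, mul_one]

lemma mul_ne_one (hu : IsInvolution u) (huv : u ≠ v) : u * v ≠ 1 := fun h =>
  huv (by rw [← hu.inv_eq_self, inv_eq_of_mul_eq_one_right h])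

end IsInvolution

section Conj

variable {G : Type*} [Group G] {g x : G}

lemma conj_eq_self_iff_commute : g * x * g⁻¹ = x ↔ Commute g x :=
  mul_inv_eq_iff_eq_mul

lemma IsMalnormal.mem_of_conj_mem {Z : Subgroup G} (hZ : IsMalnormal Z) (hx : x ∈ Z)
    (hx1 : x ≠ 1) (hgx : g * x * g⁻¹ ∈ Z) : g ∈ Z := by
  by_contra hg
  exact hx1 (hZ g hg x hx hgx)

end Conj

lemma isMulTorsionFree_of_isCyclic_of_infinite (G : Type*) [Group G] [IsCyclic G] [Infinite G] :
    IsMulTorsionFree G :=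
  intCyclicMulEquiv.symm.injective.isMulTorsionFree intCyclicMulEquiv.symm.toMonoidHom

lemma Subgroup.not_isInvolution_of_mem {G : Type*} [Group G] {Z : Subgroup G} [IsCyclic Z]
    [Infinite Z] {x : G} (hx : x ∈ Z) : ¬ IsInvolution x := by
  intro hinv
  have : IsMulTorsionFree Z := isMulTorsionFree_of_isCyclic_of_infinite Z
  have hx1 : (⟨x, hx⟩ : Z) ≠ 1 := fun h => hinv.ne_one (congrArg Subtype.val h)
  apply not_isOfFinOrder_of_isMulTorsionFree hx1
  rw [← orderOf_pos_iff, Subgroup.orderOf_mk, hinv]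
  exact two_pos

section Isolated

variable {G : Type*} [Group G] {h : G}

lemma IsIsolated.exists_forall_conj_notMem (hI : IsIsolated h) :
    ∃ Z : Subgroup G, h ∈ Z ∧ ∀ w : G, IsInvolution w → w * h * w⁻¹ ∉ Z := by
  obtain ⟨hord, Z, hhZ, hmal, hcyc, hinf⟩ := hI
  have h1 : h ≠ 1 := fun e => by simp [e] at hord
  exact ⟨Z, hhZ, fun w hw hconj =>
    Subgroup.not_isInvolution_of_mem (hmal.mem_of_conj_mem hhZ h1 hconj) hw⟩

lemma IsIsolated.not_isTranslation (hI : IsIsolated h) : ¬ IsTranslation h := by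
  rintro ⟨-, u, v, hu, hv, -, rfl⟩
  obtain ⟨Z, hhZ, hZ⟩ := hI.exists_forall_conj_notMem
  exact hZ u hu (by rw [hu.conj_mul_left hv]; exact Z.inv_mem hhZ)

lemma IsIsolated.not_isHomothety (hI : IsIsolated h) : ¬ IsHomothety h := by
  rintro ⟨-, w, hw, hwh⟩
  obtain ⟨Z, hhZ, hZ⟩ := hI.exists_forall_conj_notMem
  exact hZ w hw (by rwa [conj_eq_self_iff_commute.mpr hwh.symm])

end Isolated

def ConjFreeOnInvolutionPairs (G : Type*) [Group G] : Prop :=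
  ∀ u v g : G, IsInvolution u → IsInvolution v → u ≠ v →
    g * u * g⁻¹ = u → g * v * g⁻¹ = v → g = 1

lemma ClassC.conjFreeOnInvolutionPairs {G : Type*} [Group G] (hC : ClassC G) :
    ConjFreeOnInvolutionPairs G :=
  hC.2.1

namespace ConjFreeOnInvolutionPairs

variable {G : Type*} [Group G] (hG : ConjFreeOnInvolutionPairs G)
include hG

lemma commute_of_conj_eq_inv {h t w : G} (h1 : h ≠ 1) (ht : IsInvolution t)
    (hw : IsInvolution w) (hth : t * h * t⁻¹ = h⁻¹) (hwh : Commute w h) : Commute t w := by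
  rw [← conj_eq_self_iff_commute]
  by_contra hne
  have hfix : h * w * h⁻¹ = w := conj_eq_self_iff_commute.mpr hwh.symm
  have hfix' : h * (t * w * t⁻¹) * h⁻¹ = t * w * t⁻¹ := by
    have hth' : t⁻¹ * h * t = h⁻¹ := by rwa [ht.inv_eq_self] at hth ⊢
    calc h * (t * w * t⁻¹) * h⁻¹
        = t * ((t⁻¹ * h * t) * w * (t⁻¹ * h * t)⁻¹) * t⁻¹ := by group
      _ = t * w * t⁻¹ := by rw [hth', conj_eq_self_iff_commute.mpr hwh.symm.inv_left]
  exact h1 (hG w _ h hw (hw.conj t) (Ne.symm hne) hfix hfix')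

lemma not_commute_mul {u v w : G} (hu : IsInvolution u) (hv : IsInvolution v) (huv : u ≠ v)
    (hw : IsInvolution w) : ¬ Commute w (u * v) := by
  intro hwh
  have h1 := hu.mul_ne_one huv
  have hwu := (hG.commute_of_conj_eq_inv h1 hu hw (hu.conj_mul_left hv) hwh).symm
  have hwv := (hG.commute_of_conj_eq_inv h1 hv hw (hu.conj_mul_right hv) hwh).symm
  exact hw.ne_one (hG u v w hu hv huv (conj_eq_self_iff_commute.mpr hwu)
    (conj_eq_self_iff_commute.mpr hwv))

end ConjFreeOnInvolutionPairs

theorem stmt_11_general {G : Type*} [Group G] (hC : ClassC G) (h : G) :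
    (IsHomothety h → ¬ IsTranslation h) ∧
    (IsIsolated h → ¬ IsTranslation h ∧ ¬ IsHomothety h) := by
  refine ⟨?_, fun hI => ⟨hI.not_isTranslation, hI.not_isHomothety⟩⟩
  rintro ⟨-, w, hw, hwh⟩ ⟨-, u, v, hu, hv, huv, rfl⟩
  exact hC.conjFreeOnInvolutionPairs.not_commute_mul hu hv huv hw hwh.symm

/-- In a group of the class `𝒞`, an element of infinite order which is a homothety cannot be
a translation; hence the three types of infinite-order elements (translation, homothety,
isolated) are mutually exclusive. -/
theorem stmt_11 {G : Type*} [Group G] (hC : ClassC G) (h : G) (hord : orderOf h = 0) :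
    (IsHomothety h → ¬ IsTranslation h) ∧
    (IsIsolated h → ¬ IsTranslation h ∧ ¬ IsHomothety h) :=
  stmt_11_general hC h
end
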